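/- arXiv:1905.06427 — 3 statements merged into one kernel-verified Lean document; each statement's English description precedes it below -/
import Mathlib

section
/- Let β > 0 and define f0(s) = s, f1(s) = 1 + β²·s², f2(s) = (s² + 1)·arccos(2/(s² + 1) − 1), f3(s) = (β²·s² + 1)·arccos(2/(β²·s² + 1) − 1). Then for every s > 0 the fourth-order Wronskian determinant W(f0, f1, f2, f3)(s) (the determinant of the 4×4 matrix whose rows are the functions and their first three derivatives at s) equals 16β³(β² − 1)·(2s(s² − 1) + (s² + 1)²·arccos(2/(s² + 1) − 1)) / ((s² + 1)²·(β²·s² + 1)²). -/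
/-!
For `x ≥ 0` we have `arccos (2 / (x ^ 2 + 1) - 1) = 2 * arctan x`, because
`cos (2 * arctan x) = 2 * cos (arctan x) ^ 2 - 1 = 2 / (x ^ 2 + 1) - 1` and `2 * arctan x ∈ [0, π]`.
Hence on `s > 0` we have `f2 = G` and `f3 = G (β * ·)` with `G x = 2 (x ^ 2 + 1) arctan x`, a smooth
function with elementary derivatives (`G''' = 8 / (x ^ 2 + 1) ^ 2`). The Wronskian becomes an explicit
`4 × 4` determinant, in which all terms containing `arctan (β s)` cancel.
-/

open Real Filter Topology

theorem arccos_two_div_sq_add_one_sub_one {x : ℝ} (hx : 0 ≤ x) :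
    arccos (2 / (x ^ 2 + 1) - 1) = 2 * arctan x := by
  have hcos : cos (2 * arctan x) = 2 / (x ^ 2 + 1) - 1 := by
    rw [cos_two_mul, cos_sq_arctan, add_comm (1 : ℝ)]; ring
  rw [← hcos, arccos_cos (by linarith [arctan_nonneg.mpr hx])
    (by linarith [arctan_lt_pi_div_two x])]

noncomputable def sqAddOneArctan (x : ℝ) : ℝ := 2 * (x ^ 2 + 1) * arctan x

theorem sq_add_one_mul_arccos_eq_sqAddOneArctan {x : ℝ} (hx : 0 ≤ x) :
    (x ^ 2 + 1) * arccos (2 / (x ^ 2 + 1) - 1) = sqAddOneArctan x := by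
  rw [arccos_two_div_sq_add_one_sub_one hx, sqAddOneArctan]; ring

theorem deriv_sqAddOneArctan : deriv sqAddOneArctan = fun x => 4 * x * arctan x + 2 := by
  funext x
  refine HasDerivAt.deriv ?_
  refine ((((hasDerivAt_pow 2 x).add_const 1).const_mul 2).mul
    (hasDerivAt_arctan x)).congr_deriv ?_
  field_simp
  ring

theorem deriv_deriv_sqAddOneArctan :
    deriv (deriv sqAddOneArctan) = fun x => 4 * arctan x + 4 * x / (x ^ 2 + 1) := by
  funext x
  rw [deriv_sqAddOneArctan]
  refine HasDerivAt.deriv ?_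
  refine ((((hasDerivAt_id' x).const_mul 4).mul (hasDerivAt_arctan x)).add_const 2).congr_deriv ?_
  field_simp
  ring

theorem deriv_deriv_deriv_sqAddOneArctan :
    deriv (deriv (deriv sqAddOneArctan)) = fun x => 8 / (x ^ 2 + 1) ^ 2 := by
  funext x
  rw [deriv_deriv_sqAddOneArctan]
  refine HasDerivAt.deriv ?_
  refine (((hasDerivAt_arctan x).const_mul 4).add (((hasDerivAt_id' x).const_mul 4).div
    ((hasDerivAt_pow 2 x).add_const 1) (by positivity))).congr_deriv ?_
  field_simp
  ring

theorem deriv_comp_mul_left' (f : ℝ → ℝ) (c : ℝ) :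
    deriv (fun x => f (c * x)) = fun x => c * deriv f (c * x) :=
  funext fun x => deriv_comp_mul_left c f x

theorem fourth_wronskian_formula
    (β : ℝ) (hβ : 0 < β)
    (f0 f1 f2 f3 : ℝ → ℝ)
    (hf0 : f0 = fun s => s)
    (hf1 : f1 = fun s => 1 + β ^ 2 * s ^ 2)
    (hf2 : f2 = fun s => (s ^ 2 + 1) * Real.arccos (2 / (s ^ 2 + 1) - 1))
    (hf3 : f3 = fun s => (β ^ 2 * s ^ 2 + 1) * Real.arccos (2 / (β ^ 2 * s ^ 2 + 1) - 1)) :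
    ∀ s : ℝ, 0 < s →
      Matrix.det !![f0 s, f1 s, f2 s, f3 s;
                    deriv f0 s, deriv f1 s, deriv f2 s, deriv f3 s;
                    deriv (deriv f0) s, deriv (deriv f1) s, deriv (deriv f2) s,
                      deriv (deriv f3) s;
                    deriv (deriv (deriv f0)) s, deriv (deriv (deriv f1)) s,
                      deriv (deriv (deriv f2)) s, deriv (deriv (deriv f3)) s] =
        16 * β ^ 3 * (β ^ 2 - 1) *
            (2 * s * (s ^ 2 - 1) +
              (s ^ 2 + 1) ^ 2 * Real.arccos (2 / (s ^ 2 + 1) - 1)) /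
          ((s ^ 2 + 1) ^ 2 * (β ^ 2 * s ^ 2 + 1) ^ 2) := by
  intro s hs
  have h2 : f2 =ᶠ[𝓝 s] sqAddOneArctan := by
    filter_upwards [lt_mem_nhds hs] with t ht
    exact hf2 ▸ sq_add_one_mul_arccos_eq_sqAddOneArctan ht.le
  have h3 : f3 =ᶠ[𝓝 s] fun t => sqAddOneArctan (β * t) := by
    filter_upwards [lt_mem_nhds hs] with t ht
    simp only [hf3, ← mul_pow]
    exact sq_add_one_mul_arccos_eq_sqAddOneArctan (by positivity)
  rw [h2.eq_of_nhds, h2.deriv.eq_of_nhds, h2.deriv.deriv.eq_of_nhds,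
    h2.deriv.deriv.deriv.eq_of_nhds, h3.eq_of_nhds, h3.deriv.eq_of_nhds,
    h3.deriv.deriv.eq_of_nhds, h3.deriv.deriv.deriv.eq_of_nhds,
    arccos_two_div_sq_add_one_sub_one hs.le]
  simp only [deriv_comp_mul_left', deriv_const_mul_field']
  rw [deriv_deriv_deriv_sqAddOneArctan, deriv_deriv_sqAddOneArctan, deriv_sqAddOneArctan]
  subst hf0 hf1
  rw [Matrix.det_succ_column_zero, Fin.sum_univ_four]
  simp [Matrix.det_fin_three, Fin.succAbove, sqAddOneArctan]
  field_simp
  ring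
end

section
/- Let b < 0, d > 0, e > 0, ξ > 0 and v1⁻, v1⁺, b11⁻, b22⁻, b11⁺, b22⁺ be real numbers, and let M1 be the first-order Melnikov function defined in the context. Then lim_{y0 → +∞} M1(y0)/y0 = −π·(ξ·(b11⁻ + b22⁻) + b11⁺ + b22⁺)/(2ξ). In particular, if ξ(b11⁻+b22⁻) + b11⁺ + b22⁺ ≠ 0, then for all sufficiently large y0 the sign of M1(y0) equals −sign(ξ(b11⁻+b22⁻) + b11⁺ + b22⁺). -/
/-!
After division by `y0`, every term of `M1 y0 / y0` is a constant times `1 / y0`, a quotient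
`(c + y0 ^ 2 * k) / y0 ^ 2 → k`, or such a quotient times `arccos (2 * c / (c + y0 ^ 2 * k) - 1)`,
whose argument tends to `-1`, so the arccos tends to `π`. Once `M1 y0 / y0` has a nonzero limit,
`M1 y0` eventually has the sign of that limit.
-/

open Real Filter Topology

theorem tendsto_arccos_div_sub_one {α : Type*} {l : Filter α} {f : α → ℝ} (a : ℝ)
    (hf : Tendsto f l atTop) : Tendsto (fun x => arccos (a / f x - 1)) l (𝓝 π) := by
  have h : Tendsto (fun x => a / f x - 1) l (𝓝 (-1)) := by
    simpa using (tendsto_const_nhds.div_atTop hf).sub_const 1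
  simpa [arccos_neg_one, Function.comp_def] using (continuous_arccos.tendsto (-1)).comp h

theorem tendsto_add_sq_mul_div_sq (c k : ℝ) :
    Tendsto (fun y : ℝ => (c + y ^ 2 * k) / y ^ 2) atTop (𝓝 k) := by
  have h : Tendsto (fun y : ℝ => c * (y ^ 2)⁻¹ + k) atTop (𝓝 (c * 0 + k)) :=
    ((tendsto_inv_atTop_zero.comp (tendsto_pow_atTop two_ne_zero)).const_mul c).add_const k
  rw [mul_zero, zero_add] at h
  refine h.congr' ?_
  filter_upwards [eventually_ne_atTop 0] with y hy
  field_simp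

theorem tendsto_add_sq_mul_div_sq_mul_arccos (c : ℝ) {k : ℝ} (hk : 0 < k) :
    Tendsto (fun y : ℝ => (c + y ^ 2 * k) / y ^ 2 * arccos (2 * c / (c + y ^ 2 * k) - 1))
      atTop (𝓝 (k * π)) :=
  (tendsto_add_sq_mul_div_sq c k).mul <| tendsto_arccos_div_sub_one _ <|
    tendsto_atTop_add_const_left _ c ((tendsto_pow_atTop two_ne_zero).atTop_mul_const hk)

theorem Real.sign_mul_of_pos_left {c : ℝ} (hc : 0 < c) (x : ℝ) : sign (c * x) = sign x := by
  rcases lt_trichotomy x 0 with hx | rfl | hx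
  · rw [sign_of_neg hx, sign_of_neg (mul_neg_of_pos_of_neg hc hx)]
  · rw [mul_zero]
  · rw [sign_of_pos hx, sign_of_pos (mul_pos hc hx)]

theorem eventually_sign_eq_of_tendsto_div_self {f : ℝ → ℝ} {L : ℝ}
    (hf : Tendsto (fun y => f y / y) atTop (𝓝 L)) (hL : L ≠ 0) :
    ∀ᶠ y in atTop, sign (f y) = sign L := by
  rcases hL.lt_or_gt with hL | hL
  · filter_upwards [hf.eventually_lt_const hL, eventually_gt_atTop 0] with y hfy hy
    rw [sign_of_neg hL, sign_of_neg (neg_of_div_neg_left hfy hy.le)]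
  · filter_upwards [hf.eventually_const_lt hL, eventually_gt_atTop 0] with y hfy hy
    rw [sign_of_pos hL, sign_of_pos ((div_pos_iff_of_pos_right hy).1 hfy)]

noncomputable def melnikovM1 (b d e ξ v1m v1p b11m b22m b11p b22p : ℝ) (y0 : ℝ) : ℝ :=
  (1 / (2 * y0)) *
    (4 * v1m * y0 -
      2 * (b11m + b22m) * (π * (e ^ 2 + y0 ^ 2) + e * y0) +
      (b11m + b22m) * (e ^ 2 + y0 ^ 2) *
        arccos (2 * e ^ 2 / (e ^ 2 + y0 ^ 2) - 1) -
      (1 / (b * ξ ^ 3)) *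
        (-2 * b * d * y0 * ξ * (b11p + b22p) - 4 * v1p * y0 * ξ ^ 3 +
          b * (b11p + b22p) * (d ^ 2 + y0 ^ 2 * ξ ^ 2) *
            arccos (2 * d ^ 2 / (d ^ 2 + y0 ^ 2 * ξ ^ 2) - 1)))

theorem tendsto_melnikovM1_div_self (b d e ξ v1m v1p b11m b22m b11p b22p : ℝ)
    (hb : b ≠ 0) (hξ : 0 < ξ) :
    Tendsto (fun y0 => melnikovM1 b d e ξ v1m v1p b11m b22m b11p b22p y0 / y0) atTop
      (𝓝 (-(π * (ξ * (b11m + b22m) + b11p + b22p) / (2 * ξ)))) := by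
  set A := b11m + b22m
  set B := b11p + b22p
  have hinv : Tendsto (fun y : ℝ => y⁻¹) atTop (𝓝 0) := tendsto_inv_atTop_zero
  have hm := tendsto_add_sq_mul_div_sq (e ^ 2) 1
  have hm_arccos := tendsto_add_sq_mul_div_sq_mul_arccos (e ^ 2) one_pos
  have hp_arccos := tendsto_add_sq_mul_div_sq_mul_arccos (d ^ 2) (pow_pos hξ 2)
  simp only [mul_one, one_mul] at hm hm_arccos
  have h := ((((hinv.const_mul (2 * v1m)).sub (hm.const_mul (A * π))).sub
    (hinv.const_mul (A * e))).add (hm_arccos.const_mul (A / 2))).sub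
    (((hinv.const_mul (-(b * d * ξ * B) - 2 * v1p * ξ ^ 3)).add
      (hp_arccos.const_mul (b * B / 2))).const_mul (1 / (b * ξ ^ 3)))
  convert h.congr' ?_ using 2
  · field_simp
    ring
  filter_upwards [eventually_ne_atTop 0] with y hy
  simp only [melnikovM1]
  generalize arccos (2 * e ^ 2 / (e ^ 2 + y ^ 2) - 1) = c₁
  generalize arccos (2 * d ^ 2 / (d ^ 2 + y ^ 2 * ξ ^ 2) - 1) = c₂
  field_simp
  ring

theorem melnikov_limit_at_infinity_general
    (b d e ξ v1m v1p b11m b22m b11p b22p : ℝ)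
    (hb : b < 0) (hξ : 0 < ξ)
    (M1 : ℝ → ℝ)
    (hM1 : M1 = fun y0 =>
      (1 / (2 * y0)) *
        (4 * v1m * y0 -
          2 * (b11m + b22m) * (π * (e ^ 2 + y0 ^ 2) + e * y0) +
          (b11m + b22m) * (e ^ 2 + y0 ^ 2) *
            Real.arccos (2 * e ^ 2 / (e ^ 2 + y0 ^ 2) - 1) -
          (1 / (b * ξ ^ 3)) *
            (-2 * b * d * y0 * ξ * (b11p + b22p) - 4 * v1p * y0 * ξ ^ 3 +
              b * (b11p + b22p) * (d ^ 2 + y0 ^ 2 * ξ ^ 2) *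
                Real.arccos (2 * d ^ 2 / (d ^ 2 + y0 ^ 2 * ξ ^ 2) - 1)))) :
    Tendsto (fun y0 => M1 y0 / y0) atTop
      (nhds (-(π * (ξ * (b11m + b22m) + b11p + b22p) / (2 * ξ)))) ∧
    (ξ * (b11m + b22m) + b11p + b22p ≠ 0 →
      ∀ᶠ y0 in atTop,
        Real.sign (M1 y0) = -Real.sign (ξ * (b11m + b22m) + b11p + b22p)) := by
  obtain rfl : M1 = melnikovM1 b d e ξ v1m v1p b11m b22m b11p b22p := hM1
  have hlim := tendsto_melnikovM1_div_self b d e ξ v1m v1p b11m b22m b11p b22p hb.ne hξ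
  refine ⟨hlim, fun hS => ?_⟩
  have hc : 0 < π / (2 * ξ) := by positivity
  rw [show ∀ S : ℝ, -(π * S / (2 * ξ)) = -(π / (2 * ξ) * S) from fun S => by ring] at hlim
  filter_upwards [eventually_sign_eq_of_tendsto_div_self hlim
    (neg_ne_zero.2 (mul_ne_zero hc.ne' hS))] with y hy
  rw [hy, sign_neg, sign_mul_of_pos_left hc]

theorem melnikov_limit_at_infinity
    (b d e ξ v1m v1p b11m b22m b11p b22p : ℝ)
    (hb : b < 0) (hd : 0 < d) (he : 0 < e) (hξ : 0 < ξ)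
    (M1 : ℝ → ℝ)
    (hM1 : M1 = fun y0 =>
      (1 / (2 * y0)) *
        (4 * v1m * y0 -
          2 * (b11m + b22m) * (π * (e ^ 2 + y0 ^ 2) + e * y0) +
          (b11m + b22m) * (e ^ 2 + y0 ^ 2) *
            Real.arccos (2 * e ^ 2 / (e ^ 2 + y0 ^ 2) - 1) -
          (1 / (b * ξ ^ 3)) *
            (-2 * b * d * y0 * ξ * (b11p + b22p) - 4 * v1p * y0 * ξ ^ 3 +
              b * (b11p + b22p) * (d ^ 2 + y0 ^ 2 * ξ ^ 2) *
                Real.arccos (2 * d ^ 2 / (d ^ 2 + y0 ^ 2 * ξ ^ 2) - 1)))) :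
    Tendsto (fun y0 => M1 y0 / y0) atTop
      (nhds (-(π * (ξ * (b11m + b22m) + b11p + b22p) / (2 * ξ)))) ∧
    (ξ * (b11m + b22m) + b11p + b22p ≠ 0 →
      ∀ᶠ y0 in atTop,
        Real.sign (M1 y0) = -Real.sign (ξ * (b11m + b22m) + b11p + b22p)) :=
  melnikov_limit_at_infinity_general b d e ξ v1m v1p b11m b22m b11p b22p hb hξ M1 hM1
end

section
/- Define g0(s) = s and g1(s) = (s² + 1)·arccos(1 − 2/(s² + 1)). Then for every s > 0 the Wronskian W(g0, g1)(s) = g0(s)·g1'(s) − g0'(s)·g1(s) equals −2s + (s² − 1)·arccos(1 − 2/(s² + 1)); moreover, for every s > 0 one has −2s + (s² − 1)·arccos(1 − 2/(s² + 1)) < 0, so this Wronskian has no zeros in (0, ∞). -/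
/-!
On `s ≥ 0` the angle `arccos (1 - 2 / (s ^ 2 + 1))` equals `π - 2 * arctan s`, since
`cos (2 * arctan s) = 2 / (1 + s ^ 2) - 1`. Hence `g1' s = 2 * s * arccos (…) - 2`, which gives
the formula for the Wronskian. For its sign, the term `(s ^ 2 - 1) * arccos (…)` is nonpositive when
`s ≤ 1`, and for `s > 1` it equals `2 * (s ^ 2 - 1) * arctan s⁻¹ < 2 * (s ^ 2 - 1) / s < 2 * s`.
-/

open Real

namespace Real

lemma arctan_lt_self {x : ℝ} (hx : 0 < x) : arctan x < x := by
  rcases lt_or_ge x (π / 2) with hlt | hge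
  · calc arctan x < arctan (tan x) := arctan_strictMono (lt_tan hx hlt)
      _ = x := arctan_tan (by linarith [pi_pos]) hlt
  · exact (arctan_lt_pi_div_two x).trans_le hge

lemma cos_two_mul_arctan (x : ℝ) : cos (2 * arctan x) = 2 / (1 + x ^ 2) - 1 := by
  rw [cos_two_mul, cos_sq_arctan]
  ring

lemma arccos_one_sub_two_div_sq_add_one {x : ℝ} (hx : 0 ≤ x) :
    arccos (1 - 2 / (x ^ 2 + 1)) = π - 2 * arctan x := by
  have h0 : 0 ≤ arctan x := arctan_nonneg.mpr hx
  have hπ := arctan_lt_pi_div_two x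
  rw [show 1 - 2 / (x ^ 2 + 1) = -cos (2 * arctan x) by rw [cos_two_mul_arctan, add_comm]; ring,
    arccos_neg, arccos_cos (by linarith) (by linarith)]

lemma hasDerivAt_sq_add_one_mul_arccos {s : ℝ} (hs : 0 < s) :
    HasDerivAt (fun t => (t ^ 2 + 1) * arccos (1 - 2 / (t ^ 2 + 1)))
      (2 * s * arccos (1 - 2 / (s ^ 2 + 1)) - 2) s := by
  have heq : (fun t => (t ^ 2 + 1) * (π - 2 * arctan t)) =ᶠ[nhds s]
      fun t => (t ^ 2 + 1) * arccos (1 - 2 / (t ^ 2 + 1)) := by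
    filter_upwards [eventually_gt_nhds hs] with t ht
    rw [arccos_one_sub_two_div_sq_add_one ht.le]
  have hderiv := ((hasDerivAt_pow 2 s).add_const 1).mul
    (((hasDerivAt_arctan s).const_mul 2).const_sub π)
  refine (hderiv.congr_of_eventuallyEq heq.symm).congr_deriv ?_
  rw [arccos_one_sub_two_div_sq_add_one hs.le]
  field_simp
  ring

lemma sq_sub_one_mul_arccos_one_sub_two_div_lt {s : ℝ} (hs : 0 < s) :
    (s ^ 2 - 1) * arccos (1 - 2 / (s ^ 2 + 1)) < 2 * s := by
  rcases le_or_gt s 1 with hle | hgt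
  · have hsq : s ^ 2 - 1 ≤ 0 := by nlinarith
    linarith [mul_nonpos_of_nonpos_of_nonneg hsq (arccos_nonneg (1 - 2 / (s ^ 2 + 1)))]
  · have hinv : arctan s⁻¹ < s⁻¹ := arctan_lt_self (inv_pos.mpr hs)
    have hangle : arccos (1 - 2 / (s ^ 2 + 1)) = 2 * arctan s⁻¹ := by
      rw [arccos_one_sub_two_div_sq_add_one hs.le, arctan_inv_of_pos hs]
      ring
    calc (s ^ 2 - 1) * arccos (1 - 2 / (s ^ 2 + 1))
        < (s ^ 2 - 1) * (2 * s⁻¹) := by rw [hangle]; gcongr; nlinarith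
      _ < 2 * s := by field_simp; nlinarith

end Real

theorem pair_wronskian_formula_and_sign
    (g0 g1 : ℝ → ℝ)
    (hg0 : g0 = fun s => s)
    (hg1 : g1 = fun s => (s ^ 2 + 1) * Real.arccos (1 - 2 / (s ^ 2 + 1))) :
    ∀ s : ℝ, 0 < s →
      g0 s * deriv g1 s - deriv g0 s * g1 s =
        -2 * s + (s ^ 2 - 1) * Real.arccos (1 - 2 / (s ^ 2 + 1)) ∧
      -2 * s + (s ^ 2 - 1) * Real.arccos (1 - 2 / (s ^ 2 + 1)) < 0 := by
  subst hg0 hg1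
  intro s hs
  refine ⟨?_, by linarith [sq_sub_one_mul_arccos_one_sub_two_div_lt hs]⟩
  rw [(hasDerivAt_sq_add_one_mul_arccos hs).deriv, deriv_id'']
  ring
end
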